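/- Every strongly β-normalizing pure λ-term is the essence of some well-typed LF_Δ object: if M is strongly normalizing then there exists a signature Σ, a context Γ, an LF_Δ term Δ and a type σ such that Γ ⊢_Σ Δ : σ and the essence of Δ equals M. -/

import Mathlib

set_option autoImplicit false

namespace LFDelta

/-- Equivalence closure of a relation (conversion). -/
inductive Conv {α : Type} (r : α → α → Prop) : α → α → Prop
| rel {a b : α} : r a b → Conv r a b
| refl (a : α) : Conv r a a
| symm {a b : α} : Conv r a b → Conv r b a
| trans {a b c : α} : Conv r a b → Conv r b c → Conv r a c

/-- Types of the intersection-union type assignment system B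
    (with ⊤, used only for the extended system B⁺). -/
inductive BTy : Type
| atom (a : ℕ)
| top
| arr (σ τ : BTy)
| inter (σ τ : BTy)
| union (σ τ : BTy)
deriving DecidableEq

/-- ω-free types of system B. -/
def BTy.OmegaFree : BTy → Prop
| .atom _ => True
| .top => False
| .arr σ τ => σ.OmegaFree ∧ τ.OmegaFree
| .inter σ τ => σ.OmegaFree ∧ τ.OmegaFree
| .union σ τ => σ.OmegaFree ∧ τ.OmegaFree

/-- Untyped λ-terms (de Bruijn), possibly containing constants
    (the constants c, c_× and c_{|σ|} are used for translations). -/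
inductive Lam : Type
| var (n : ℕ)
| app (M N : Lam)
| lam (M : Lam)
| const (c : ℕ)
| cx
| cty (σ : BTy)
deriving DecidableEq

namespace Lam

/-- Pure λ-terms: no constants. -/
def Pure : Lam → Prop
| .var _ => True
| .app M N => Pure M ∧ Pure N
| .lam M => Pure M
| _ => False

/-- Lift (shift) free variables ≥ c by one. -/
def lift (c : ℕ) : Lam → Lam
| .var n => if n < c then .var n else .var (n+1)
| .app M N => .app (lift c M) (lift c N)
| .lam M => .lam (lift (c+1) M)
| .const k => .const k
| .cx => .cx
| .cty σ => .cty σ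

/-- Substitute N for variable k. -/
def subst (k : ℕ) (N : Lam) : Lam → Lam
| .var n => if n < k then .var n else if n = k then (lift 0)^[k] N else .var (n-1)
| .app M₁ M₂ => .app (subst k N M₁) (subst k N M₂)
| .lam M => .lam (subst (k+1) N M)
| .const c => .const c
| .cx => .cx
| .cty σ => .cty σ

/-- One-step β-reduction. -/
inductive StepB : Lam → Lam → Prop
| beta {M N : Lam} : StepB (.app (.lam M) N) (subst 0 N M)
| appL {M M' N : Lam} : StepB M M' → StepB (.app M N) (.app M' N)
| appR {M N N' : Lam} : StepB N N' → StepB (.app M N) (.app M N')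
| lam {M M' : Lam} : StepB M M' → StepB (.lam M) (.lam M')

/-- One-step η-reduction. -/
inductive StepE : Lam → Lam → Prop
| eta {M : Lam} : StepE (.lam (.app (lift 0 M) (.var 0))) M
| appL {M M' N : Lam} : StepE M M' → StepE (.app M N) (.app M' N)
| appR {M N N' : Lam} : StepE N N' → StepE (.app M N) (.app M N')
| lam {M M' : Lam} : StepE M M' → StepE (.lam M) (.lam M')

/-- β-convertibility. -/
def BetaEq : Lam → Lam → Prop := Conv StepB

/-- βη-convertibility. -/
def BetaEtaEq : Lam → Lam → Prop := Conv (fun a b => StepB a b ∨ StepE a b)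

/-- Strong β-normalization. -/
def SNBeta (M : Lam) : Prop := Acc (fun a b => StepB b a) M

end Lam

/-- The subtype theory Ξ of system B without the ω-axioms (5) and (13),
    i.e. axioms/rules (1)-(4), (6)-(12), (14). -/
inductive SubB : BTy → BTy → Prop
| idemInter {σ : BTy} : SubB σ (.inter σ σ)                                  -- (1)
| idemUnion {σ : BTy} : SubB (.union σ σ) σ                                  -- (2)
| interL {σ τ : BTy} : SubB (.inter σ τ) σ                                   -- (3)
| interR {σ τ : BTy} : SubB (.inter σ τ) τ                                   -- (3)
| unionL {σ τ : BTy} : SubB σ (.union σ τ)                                   -- (4)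
| unionR {σ τ : BTy} : SubB τ (.union σ τ)                                   -- (4)
| refl {σ : BTy} : SubB σ σ                                                  -- (6)
| monoInter {σ₁ σ₂ τ₁ τ₂ : BTy} :
    SubB σ₁ σ₂ → SubB τ₁ τ₂ → SubB (.inter σ₁ τ₁) (.inter σ₂ τ₂)             -- (7)
| monoUnion {σ₁ σ₂ τ₁ τ₂ : BTy} :
    SubB σ₁ σ₂ → SubB τ₁ τ₂ → SubB (.union σ₁ τ₁) (.union σ₂ τ₂)             -- (8)
| trans {σ τ ρ : BTy} : SubB σ τ → SubB τ ρ → SubB σ ρ                        -- (9)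
| dist {σ τ ρ : BTy} :
    SubB (.inter σ (.union τ ρ)) (.union (.inter σ τ) (.inter σ ρ))          -- (10)
| arrInter {σ τ ρ : BTy} :
    SubB (.inter (.arr σ τ) (.arr σ ρ)) (.arr σ (.inter τ ρ))                -- (11)
| arrUnion {σ τ ρ : BTy} :
    SubB (.inter (.arr σ ρ) (.arr τ ρ)) (.arr (.union σ τ) ρ)                -- (12)
| arrow {σ₁ σ₂ τ₁ τ₂ : BTy} :
    SubB σ₂ σ₁ → SubB τ₁ τ₂ → SubB (.arr σ₁ τ₁) (.arr σ₂ τ₂)                  -- (14)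

/-- The subtype theory Ξ' (Ξ without (5), (10), (13)), parametrized by
    additional axioms `ax`. -/
inductive Xi' (ax : BTy → BTy → Prop) : BTy → BTy → Prop
| ax {σ τ : BTy} : ax σ τ → Xi' ax σ τ
| idemInter {σ : BTy} : Xi' ax σ (.inter σ σ)
| idemUnion {σ : BTy} : Xi' ax (.union σ σ) σ
| interL {σ τ : BTy} : Xi' ax (.inter σ τ) σ
| interR {σ τ : BTy} : Xi' ax (.inter σ τ) τ
| unionL {σ τ : BTy} : Xi' ax σ (.union σ τ)
| unionR {σ τ : BTy} : Xi' ax τ (.union σ τ)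
| refl {σ : BTy} : Xi' ax σ σ
| monoInter {σ₁ σ₂ τ₁ τ₂ : BTy} :
    Xi' ax σ₁ σ₂ → Xi' ax τ₁ τ₂ → Xi' ax (.inter σ₁ τ₁) (.inter σ₂ τ₂)
| monoUnion {σ₁ σ₂ τ₁ τ₂ : BTy} :
    Xi' ax σ₁ σ₂ → Xi' ax τ₁ τ₂ → Xi' ax (.union σ₁ τ₁) (.union σ₂ τ₂)
| trans {σ τ ρ : BTy} : Xi' ax σ τ → Xi' ax τ ρ → Xi' ax σ ρ
| arrInter {σ τ ρ : BTy} :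
    Xi' ax (.inter (.arr σ τ) (.arr σ ρ)) (.arr σ (.inter τ ρ))
| arrUnion {σ τ ρ : BTy} :
    Xi' ax (.inter (.arr σ ρ) (.arr τ ρ)) (.arr (.union σ τ) ρ)
| arrow {σ₁ σ₂ τ₁ τ₂ : BTy} :
    Xi' ax σ₂ σ₁ → Xi' ax τ₁ τ₂ → Xi' ax (.arr σ₁ τ₁) (.arr σ₂ τ₂)

/-- Type assignment of system B (Curry style), extended with constant
    typing axioms `ξ` and the constants c_× and c_{|σ|} of B⁺.
    With `ξ := fun _ _ => False` and on pure terms this is exactly system B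
    without ω. -/
inductive BPlus (ξ : ℕ → BTy → Prop) : List BTy → Lam → BTy → Prop
| var {Γ : List BTy} {n : ℕ} {σ : BTy} :
    Γ[n]? = some σ → BPlus ξ Γ (.var n) σ
| const {Γ : List BTy} {c : ℕ} {σ : BTy} : ξ c σ → BPlus ξ Γ (.const c) σ
| cx {Γ : List BTy} : BPlus ξ Γ .cx (.arr .top (.arr .top .top))
| cty {Γ : List BTy} {σ : BTy} :
    BPlus ξ Γ (.cty σ) (.arr .top (.arr (.arr σ .top) .top))
| abs {Γ : List BTy} {M : Lam} {σ τ : BTy} :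
    BPlus ξ (σ :: Γ) M τ → BPlus ξ Γ (.lam M) (.arr σ τ)
| app {Γ : List BTy} {M N : Lam} {σ τ : BTy} :
    BPlus ξ Γ M (.arr σ τ) → BPlus ξ Γ N σ → BPlus ξ Γ (.app M N) τ
| interI {Γ : List BTy} {M : Lam} {σ τ : BTy} :
    BPlus ξ Γ M σ → BPlus ξ Γ M τ → BPlus ξ Γ M (.inter σ τ)
| interEl {Γ : List BTy} {M : Lam} {σ τ : BTy} :
    BPlus ξ Γ M (.inter σ τ) → BPlus ξ Γ M σ
| interEr {Γ : List BTy} {M : Lam} {σ τ : BTy} :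
    BPlus ξ Γ M (.inter σ τ) → BPlus ξ Γ M τ
| unionIl {Γ : List BTy} {M : Lam} {σ τ : BTy} :
    BPlus ξ Γ M σ → BPlus ξ Γ M (.union σ τ)
| unionIr {Γ : List BTy} {M : Lam} {σ τ : BTy} :
    BPlus ξ Γ M τ → BPlus ξ Γ M (.union σ τ)
| unionE {Γ : List BTy} {M N : Lam} {σ τ ρ : BTy} :
    BPlus ξ (σ :: Γ) M ρ → BPlus ξ (τ :: Γ) M ρ → BPlus ξ Γ N (.union σ τ) →
    BPlus ξ Γ (Lam.subst 0 N M) ρ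
| sub {Γ : List BTy} {M : Lam} {σ τ : BTy} :
    BPlus ξ Γ M σ → SubB σ τ → BPlus ξ Γ M τ

/-- The pseudo-terms of LF_Δ: kinds, families and objects in a single syntax
    (the typing judgments single out each syntactic class). -/
inductive Tm : Type
| type                        -- the kind Type
| pi (σ τ : Tm)               -- Πx:σ.K and Πx:σ.τ
| rarr (σ τ : Tm)             -- relevant family σ →ʳ τ
| inter (σ τ : Tm)            -- intersection family
| union (σ τ : Tm)            -- union family
| const (c : ℕ)               -- constants (family- and object-level)
| var (n : ℕ)                 -- variables (de Bruijn)
| lam (σ Δ : Tm)              -- λx:σ.Δ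
| app (Δ₁ Δ₂ : Tm)            -- application (of families and of objects)
| rlam (σ Δ : Tm)             -- relevant abstraction λʳx:σ.Δ
| rapp (Δ₁ Δ₂ : Tm)           -- relevant application
| pair (Δ₁ Δ₂ : Tm)           -- strong pair ⟨Δ₁,Δ₂⟩
| copair (Δ₁ Δ₂ : Tm)         -- strong co-pair [Δ₁,Δ₂]
| prl (Δ : Tm)                -- left projection
| prr (Δ : Tm)                -- right projection
| inl (σ Δ : Tm)              -- injection in_l^σ Δ
| inr (σ Δ : Tm)              -- injection in_r^σ Δ
deriving DecidableEq

namespace Tm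

/-- Lift free variables ≥ c by one. -/
def lift (c : ℕ) : Tm → Tm
| .type => .type
| .pi σ τ => .pi (lift c σ) (lift (c+1) τ)
| .rarr σ τ => .rarr (lift c σ) (lift c τ)
| .inter σ τ => .inter (lift c σ) (lift c τ)
| .union σ τ => .union (lift c σ) (lift c τ)
| .const k => .const k
| .var n => if n < c then .var n else .var (n+1)
| .lam σ Δ => .lam (lift c σ) (lift (c+1) Δ)
| .app Δ₁ Δ₂ => .app (lift c Δ₁) (lift c Δ₂)
| .rlam σ Δ => .rlam (lift c σ) (lift (c+1) Δ)
| .rapp Δ₁ Δ₂ => .rapp (lift c Δ₁) (lift c Δ₂)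
| .pair Δ₁ Δ₂ => .pair (lift c Δ₁) (lift c Δ₂)
| .copair Δ₁ Δ₂ => .copair (lift c Δ₁) (lift c Δ₂)
| .prl Δ => .prl (lift c Δ)
| .prr Δ => .prr (lift c Δ)
| .inl σ Δ => .inl (lift c σ) (lift c Δ)
| .inr σ Δ => .inr (lift c σ) (lift c Δ)

/-- Substitute the object N for variable k. -/
def subst (k : ℕ) (N : Tm) : Tm → Tm
| .type => .type
| .pi σ τ => .pi (subst k N σ) (subst (k+1) N τ)
| .rarr σ τ => .rarr (subst k N σ) (subst k N τ)
| .inter σ τ => .inter (subst k N σ) (subst k N τ)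
| .union σ τ => .union (subst k N σ) (subst k N τ)
| .const c => .const c
| .var n => if n < k then .var n else if n = k then (lift 0)^[k] N else .var (n-1)
| .lam σ Δ => .lam (subst k N σ) (subst (k+1) N Δ)
| .app Δ₁ Δ₂ => .app (subst k N Δ₁) (subst k N Δ₂)
| .rlam σ Δ => .rlam (subst k N σ) (subst (k+1) N Δ)
| .rapp Δ₁ Δ₂ => .rapp (subst k N Δ₁) (subst k N Δ₂)
| .pair Δ₁ Δ₂ => .pair (subst k N Δ₁) (subst k N Δ₂)
| .copair Δ₁ Δ₂ => .copair (subst k N Δ₁) (subst k N Δ₂)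
| .prl Δ => .prl (subst k N Δ)
| .prr Δ => .prr (subst k N Δ)
| .inl σ Δ => .inl (subst k N σ) (subst k N Δ)
| .inr σ Δ => .inr (subst k N σ) (subst k N Δ)

end Tm

/-- The essence function: compositionally erases all type annotations and
    proof-functional constructs (on non-objects it returns a dummy value). -/
def essence : Tm → Lam
| .var n => .var n
| .const c => .const c
| .lam _ Δ => .lam (essence Δ)
| .rlam _ Δ => .lam (essence Δ)
| .app Δ₁ Δ₂ => .app (essence Δ₁) (essence Δ₂)
| .rapp _ Δ₂ => essence Δ₂
| .pair Δ₁ _ => essence Δ₁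
| .copair Δ₁ _ => essence Δ₁
| .prl Δ => essence Δ
| .prr Δ => essence Δ
| .inl _ Δ => essence Δ
| .inr _ Δ => essence Δ
| .type => .const 0
| .pi _ _ => .const 0
| .rarr _ _ => .const 0
| .inter _ _ => .const 0
| .union _ _ => .const 0

/-- One-step reduction →_Δ of LF_Δ. Congruence rules are standard, except
    that the components of strong pairs and co-pairs must reduce in parallel,
    keeping identical essences. -/
inductive Step : Tm → Tm → Prop
| beta {σ Δ₁ Δ₂ : Tm} : Step (.app (.lam σ Δ₁) Δ₂) (Tm.subst 0 Δ₂ Δ₁)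
| rbeta {σ Δ₁ Δ₂ : Tm} : Step (.rapp (.rlam σ Δ₁) Δ₂) (Tm.subst 0 Δ₂ Δ₁)
| prl {Δ₁ Δ₂ : Tm} : Step (.prl (.pair Δ₁ Δ₂)) Δ₁
| prr {Δ₁ Δ₂ : Tm} : Step (.prr (.pair Δ₁ Δ₂)) Δ₂
| coInl {Δ₁ Δ₂ σ Δ₃ : Tm} :
    Step (.app (.copair Δ₁ Δ₂) (.inl σ Δ₃)) (.app Δ₁ Δ₃)
| coInr {Δ₁ Δ₂ σ Δ₃ : Tm} :
    Step (.app (.copair Δ₁ Δ₂) (.inr σ Δ₃)) (.app Δ₂ Δ₃)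
| piL {σ σ' τ : Tm} : Step σ σ' → Step (.pi σ τ) (.pi σ' τ)
| piR {σ τ τ' : Tm} : Step τ τ' → Step (.pi σ τ) (.pi σ τ')
| rarrL {σ σ' τ : Tm} : Step σ σ' → Step (.rarr σ τ) (.rarr σ' τ)
| rarrR {σ τ τ' : Tm} : Step τ τ' → Step (.rarr σ τ) (.rarr σ τ')
| interL {σ σ' τ : Tm} : Step σ σ' → Step (.inter σ τ) (.inter σ' τ)
| interR {σ τ τ' : Tm} : Step τ τ' → Step (.inter σ τ) (.inter σ τ')
| unionL {σ σ' τ : Tm} : Step σ σ' → Step (.union σ τ) (.union σ' τ)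
| unionR {σ τ τ' : Tm} : Step τ τ' → Step (.union σ τ) (.union σ τ')
| lamL {σ σ' Δ : Tm} : Step σ σ' → Step (.lam σ Δ) (.lam σ' Δ)
| lamR {σ Δ Δ' : Tm} : Step Δ Δ' → Step (.lam σ Δ) (.lam σ Δ')
| rlamL {σ σ' Δ : Tm} : Step σ σ' → Step (.rlam σ Δ) (.rlam σ' Δ)
| rlamR {σ Δ Δ' : Tm} : Step Δ Δ' → Step (.rlam σ Δ) (.rlam σ Δ')
| appL {Δ₁ Δ₁' Δ₂ : Tm} : Step Δ₁ Δ₁' → Step (.app Δ₁ Δ₂) (.app Δ₁' Δ₂)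
| appR {Δ₁ Δ₂ Δ₂' : Tm} : Step Δ₂ Δ₂' → Step (.app Δ₁ Δ₂) (.app Δ₁ Δ₂')
| rappL {Δ₁ Δ₁' Δ₂ : Tm} : Step Δ₁ Δ₁' → Step (.rapp Δ₁ Δ₂) (.rapp Δ₁' Δ₂)
| rappR {Δ₁ Δ₂ Δ₂' : Tm} : Step Δ₂ Δ₂' → Step (.rapp Δ₁ Δ₂) (.rapp Δ₁ Δ₂')
| prlC {Δ Δ' : Tm} : Step Δ Δ' → Step (.prl Δ) (.prl Δ')
| prrC {Δ Δ' : Tm} : Step Δ Δ' → Step (.prr Δ) (.prr Δ')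
| inlL {σ σ' Δ : Tm} : Step σ σ' → Step (.inl σ Δ) (.inl σ' Δ)
| inlR {σ Δ Δ' : Tm} : Step Δ Δ' → Step (.inl σ Δ) (.inl σ Δ')
| inrL {σ σ' Δ : Tm} : Step σ σ' → Step (.inr σ Δ) (.inr σ' Δ)
| inrR {σ Δ Δ' : Tm} : Step Δ Δ' → Step (.inr σ Δ) (.inr σ Δ')
| pairC {Δ₁ Δ₁' Δ₂ Δ₂' : Tm} :
    Step Δ₁ Δ₁' → Step Δ₂ Δ₂' → essence Δ₁' = essence Δ₂' →
    Step (.pair Δ₁ Δ₂) (.pair Δ₁' Δ₂')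
| copairC {Δ₁ Δ₁' Δ₂ Δ₂' : Tm} :
    Step Δ₁ Δ₁' → Step Δ₂ Δ₂' → essence Δ₁' = essence Δ₂' →
    Step (.copair Δ₁ Δ₂) (.copair Δ₁' Δ₂')

/-- Definitional equality =_Δ : the symmetric reflexive transitive closure
    of →_Δ. -/
def DefEq : Tm → Tm → Prop := Conv Step

/-- Strong normalization w.r.t. →_Δ. -/
def SNTm (t : Tm) : Prop := Acc (fun a b => Step b a) t

/-- Signature entries: kind declarations a:K and type declarations c:σ. -/
inductive SigEntry : Type
| kd (a : ℕ) (K : Tm)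
| ty (c : ℕ) (σ : Tm)
deriving DecidableEq

abbrev Sig := List SigEntry
abbrev Ctx := List Tm

/-- c is declared in the signature. -/
def inDom (S : Sig) (c : ℕ) : Prop :=
  (∃ K, SigEntry.kd c K ∈ S) ∨ (∃ σ, SigEntry.ty c σ ∈ S)

/-- Context lookup, with the appropriate lifting. -/
inductive VarTy : Ctx → ℕ → Tm → Prop
| zero {Γ : Ctx} {σ : Tm} : VarTy (σ :: Γ) 0 (Tm.lift 0 σ)
| succ {Γ : Ctx} {n : ℕ} {σ τ : Tm} :
    VarTy Γ n σ → VarTy (τ :: Γ) (n+1) (Tm.lift 0 σ)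

mutual
/-- Σ is a valid signature. -/
inductive SigOk : Sig → Prop
| nil : SigOk []
| kd {S : Sig} {a : ℕ} {K : Tm} :
    SigOk S → KindOk S [] K → ¬ inDom S a → SigOk (.kd a K :: S)
| ty {S : Sig} {c : ℕ} {σ : Tm} :
    SigOk S → FamTy S [] σ .type → ¬ inDom S c → SigOk (.ty c σ :: S)

/-- Γ is a valid context in Σ. -/
inductive CtxOk : Sig → Ctx → Prop
| nil {S : Sig} : SigOk S → CtxOk S []
| cons {S : Sig} {Γ : Ctx} {σ : Tm} :
    CtxOk S Γ → FamTy S Γ σ .type → CtxOk S (σ :: Γ)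

/-- K is a kind in Γ and Σ. -/
inductive KindOk : Sig → Ctx → Tm → Prop
| type {S : Sig} {Γ : Ctx} : CtxOk S Γ → KindOk S Γ .type
| pi {S : Sig} {Γ : Ctx} {σ K : Tm} :
    FamTy S Γ σ .type → KindOk S (σ :: Γ) K → KindOk S Γ (.pi σ K)

/-- σ has kind K in Γ and Σ. -/
inductive FamTy : Sig → Ctx → Tm → Tm → Prop
| const {S : Sig} {Γ : Ctx} {a : ℕ} {K : Tm} :
    CtxOk S Γ → SigEntry.kd a K ∈ S → FamTy S Γ (.const a) K
| pi {S : Sig} {Γ : Ctx} {σ τ : Tm} :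
    FamTy S Γ σ .type → FamTy S (σ :: Γ) τ .type → FamTy S Γ (.pi σ τ) .type
| app {S : Sig} {Γ : Ctx} {σ τ K Δ : Tm} :
    FamTy S Γ σ (.pi τ K) → ObjTy S Γ Δ τ →
    FamTy S Γ (.app σ Δ) (Tm.subst 0 Δ K)
| rarr {S : Sig} {Γ : Ctx} {σ τ : Tm} :
    FamTy S Γ σ .type → FamTy S Γ τ .type → FamTy S Γ (.rarr σ τ) .type
| inter {S : Sig} {Γ : Ctx} {σ τ : Tm} :
    FamTy S Γ σ .type → FamTy S Γ τ .type → FamTy S Γ (.inter σ τ) .type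
| union {S : Sig} {Γ : Ctx} {σ τ : Tm} :
    FamTy S Γ σ .type → FamTy S Γ τ .type → FamTy S Γ (.union σ τ) .type
| conv {S : Sig} {Γ : Ctx} {σ K₁ K₂ : Tm} :
    FamTy S Γ σ K₁ → KindOk S Γ K₂ → DefEq K₁ K₂ → FamTy S Γ σ K₂

/-- Δ has type σ in Γ and Σ. -/
inductive ObjTy : Sig → Ctx → Tm → Tm → Prop
| const {S : Sig} {Γ : Ctx} {c : ℕ} {σ : Tm} :
    CtxOk S Γ → SigEntry.ty c σ ∈ S → ObjTy S Γ (.const c) σ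
| var {S : Sig} {Γ : Ctx} {n : ℕ} {σ : Tm} :
    CtxOk S Γ → VarTy Γ n σ → ObjTy S Γ (.var n) σ
| lam {S : Sig} {Γ : Ctx} {σ τ Δ : Tm} :
    ObjTy S (σ :: Γ) Δ τ → ObjTy S Γ (.lam σ Δ) (.pi σ τ)
| app {S : Sig} {Γ : Ctx} {σ τ Δ₁ Δ₂ : Tm} :
    ObjTy S Γ Δ₁ (.pi σ τ) → ObjTy S Γ Δ₂ σ →
    ObjTy S Γ (.app Δ₁ Δ₂) (Tm.subst 0 Δ₂ τ)
| rlam {S : Sig} {Γ : Ctx} {σ τ Δ : Tm} :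
    ObjTy S (σ :: Γ) Δ (Tm.lift 0 τ) →
    Lam.BetaEtaEq (essence Δ) (.var 0) →
    ObjTy S Γ (.rlam σ Δ) (.rarr σ τ)
| rapp {S : Sig} {Γ : Ctx} {σ τ Δ₁ Δ₂ : Tm} :
    ObjTy S Γ Δ₁ (.rarr σ τ) → ObjTy S Γ Δ₂ σ → ObjTy S Γ (.rapp Δ₁ Δ₂) τ
| pair {S : Sig} {Γ : Ctx} {σ τ Δ₁ Δ₂ : Tm} :
    ObjTy S Γ Δ₁ σ → ObjTy S Γ Δ₂ τ →
    Lam.BetaEtaEq (essence Δ₁) (essence Δ₂) →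
    ObjTy S Γ (.pair Δ₁ Δ₂) (.inter σ τ)
| prl {S : Sig} {Γ : Ctx} {σ τ Δ : Tm} :
    ObjTy S Γ Δ (.inter σ τ) → ObjTy S Γ (.prl Δ) σ
| prr {S : Sig} {Γ : Ctx} {σ τ Δ : Tm} :
    ObjTy S Γ Δ (.inter σ τ) → ObjTy S Γ (.prr Δ) τ
| inl {S : Sig} {Γ : Ctx} {σ τ Δ : Tm} :
    ObjTy S Γ Δ σ → FamTy S Γ (.union σ τ) .type →
    ObjTy S Γ (.inl τ Δ) (.union σ τ)
| inr {S : Sig} {Γ : Ctx} {σ τ Δ : Tm} :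
    ObjTy S Γ Δ τ → FamTy S Γ (.union σ τ) .type →
    ObjTy S Γ (.inr σ Δ) (.union σ τ)
| copair {S : Sig} {Γ : Ctx} {σ τ ρ Δ₁ Δ₂ : Tm} :
    ObjTy S Γ Δ₁
      (.pi σ (Tm.subst 0 (.inl (Tm.lift 0 τ) (.var 0)) (Tm.lift 1 ρ))) →
    ObjTy S Γ Δ₂
      (.pi τ (Tm.subst 0 (.inr (Tm.lift 0 σ) (.var 0)) (Tm.lift 1 ρ))) →
    FamTy S (.union σ τ :: Γ) ρ .type →
    Lam.BetaEtaEq (essence Δ₁) (essence Δ₂) →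
    ObjTy S Γ (.copair Δ₁ Δ₂) (.pi (.union σ τ) ρ)
| conv {S : Sig} {Γ : Ctx} {σ τ Δ : Tm} :
    ObjTy S Γ Δ σ → FamTy S Γ τ .type → DefEq σ τ → ObjTy S Γ Δ τ
end

/-- The dependency-erasing translation |·| on families and kinds. -/
def eraseTy : Tm → BTy
| .type => .top
| .pi σ τ => .arr (eraseTy σ) (eraseTy τ)
| .rarr σ τ => .arr (eraseTy σ) (eraseTy τ)
| .inter σ τ => .inter (eraseTy σ) (eraseTy τ)
| .union σ τ => .union (eraseTy σ) (eraseTy τ)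
| .const a => .atom a
| .app σ _ => eraseTy σ
| _ => .top

/-- The forgetful translation ‖·‖ of LF_Δ objects and families into pure
    λ-terms with constants, flattening type annotations into redexes. -/
def tr : Tm → Lam
| .type => .const 0
| .pi σ τ => .app (.app (.cty (eraseTy σ)) (tr σ)) (.lam (tr τ))
| .rarr σ τ => .app (.app .cx (tr σ)) (tr τ)
| .inter σ τ => .app (.app .cx (tr σ)) (tr τ)
| .union σ τ => .app (.app .cx (tr σ)) (tr τ)
| .const c => .const c
| .var n => .var n
| .lam σ Δ => .app (.lam (.lam (Lam.lift 1 (tr Δ)))) (tr σ)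
| .rlam σ Δ => .app (.lam (.lam (Lam.lift 1 (tr Δ)))) (tr σ)
| .app Δ₁ Δ₂ => .app (tr Δ₁) (tr Δ₂)
| .rapp Δ₁ Δ₂ => .app (tr Δ₁) (tr Δ₂)
| .pair Δ₁ _ => tr Δ₁
| .copair Δ₁ _ => tr Δ₁
| .prl Δ => tr Δ
| .prr Δ => tr Δ
| .inl σ Δ => .app (.lam (Lam.lift 0 (tr Δ))) (tr σ)
| .inr σ Δ => .app (.lam (Lam.lift 0 (tr Δ))) (tr σ)

/-- Constant typing axioms of B⁺ induced by a signature. -/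
def sigXi (S : Sig) : ℕ → BTy → Prop :=
  fun c τ => (∃ σ, SigEntry.ty c σ ∈ S ∧ τ = eraseTy σ) ∨
             (∃ K, SigEntry.kd c K ∈ S ∧ τ = eraseTy K)

/-- Embedding of (non-dependent, relevance-free) B types as LF_Δ families. -/
def toFam : BTy → Tm
| .atom a => .const a
| .top => .const 0
| .arr σ τ => .pi (toFam σ) (Tm.lift 0 (toFam τ))
| .inter σ τ => .inter (toFam σ) (toFam τ)
| .union σ τ => .union (toFam σ) (toFam τ)

/-!
A strongly β-normalizing pure λ-term is typable in the intersection type system without `ω`: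
by induction along reduction and the subterm order, a variable-headed term takes any type,
and a head redex is typed from its contractum and its argument by subject expansion.
Such a typing derivation is read as an LF_Δ object over a signature with one base type:
intersection introduction becomes a strong pair and its elimination a projection, both
invisible to the essence.
-/

namespace Lam

open Relation

inductive ImmSubterm : Lam → Lam → Prop
| appL {A B : Lam} : ImmSubterm A (.app A B)
| appR {A B : Lam} : ImmSubterm B (.app A B)
| lam {A : Lam} : ImmSubterm A (.lam A)

theorem wellFounded_immSubterm : WellFounded ImmSubterm := by
  refine ⟨fun M => ?_⟩
  induction M <;> constructor <;> rintro _ ⟨⟩ <;> assumption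

theorem ImmSubterm.exists_stepB {N M N' : Lam} (h : ImmSubterm N M) (hs : StepB N N') :
    ∃ M', StepB M M' ∧ ImmSubterm N' M' := by
  cases h with
  | appL => exact ⟨_, .appL hs, .appL⟩
  | appR => exact ⟨_, .appR hs, .appR⟩
  | lam => exact ⟨_, .lam hs, .lam⟩

theorem exists_stepB_of_reflTransGen_immSubterm {N M N' : Lam}
    (h : ReflTransGen ImmSubterm N M) (hs : StepB N N') :
    ∃ M', StepB M M' ∧ ReflTransGen ImmSubterm N' M' := by
  induction h using ReflTransGen.head_induction_on generalizing N' with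
  | refl => exact ⟨N', hs, .refl⟩
  | head hNC _ ih =>
    obtain ⟨C', hC', hN'C'⟩ := hNC.exists_stepB hs
    obtain ⟨M', hM', hC'M'⟩ := ih hC'
    exact ⟨M', hM', .head hN'C' hC'M'⟩

def ReductOrSubterm (a b : Lam) : Prop := StepB b a ∨ ImmSubterm a b

theorem acc_reductOrSubterm_of_reflTransGen {M : Lam} (hM : M.SNBeta) :
    ∀ N, ReflTransGen ImmSubterm N M → Acc ReductOrSubterm N := by
  induction hM with
  | intro M _ ihM =>
  intro N
  induction N using wellFounded_immSubterm.induction with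
  | _ N ihN =>
  intro hNM
  refine ⟨_, ?_⟩
  rintro N' (hstep | himm)
  · obtain ⟨M', hM', hN'M'⟩ := exists_stepB_of_reflTransGen_immSubterm hNM hstep
    exact ihM M' hM' N' hN'M'
  · exact ihN N' himm (.head himm hNM)

theorem SNBeta.acc_transGen_reductOrSubterm {M : Lam} (hM : M.SNBeta) :
    Acc (TransGen ReductOrSubterm) M :=
  acc_transGen_iff.mpr (acc_reductOrSubterm_of_reflTransGen hM M .refl)

theorem Pure.lift : ∀ {M : Lam} (c : ℕ), M.Pure → (M.lift c).Pure
  | .var n, c, _ => by unfold Lam.lift; split <;> trivial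
  | .app _ _, c, h => ⟨h.1.lift c, h.2.lift c⟩
  | .lam _, c, h => Pure.lift (c + 1) h

theorem Pure.iterate_lift {Q : Lam} (hQ : Q.Pure) (k : ℕ) : ((Lam.lift 0)^[k] Q).Pure := by
  induction k with
  | zero => exact hQ
  | succ k ih => rw [Function.iterate_succ_apply']; exact ih.lift 0

theorem Pure.subst {Q : Lam} (hQ : Q.Pure) :
    ∀ {P : Lam} (k : ℕ), P.Pure → (Lam.subst k Q P).Pure
  | .var n, k, _ => by
    unfold Lam.subst
    split_ifs
    exacts [trivial, hQ.iterate_lift k, trivial]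
  | .app _ _, k, h => ⟨hQ.subst k h.1, hQ.subst k h.2⟩
  | .lam _, k, h => hQ.subst (k + 1) h

theorem Pure.of_stepB {M M' : Lam} (h : StepB M M') (hM : M.Pure) : M'.Pure := by
  induction h with
  | beta => exact hM.2.subst 0 hM.1
  | appL _ ih => exact ⟨ih hM.1, hM.2⟩
  | appR _ ih => exact ⟨hM.1, ih hM.2⟩
  | lam _ ih => exact ih hM

theorem Pure.of_transGen_reductOrSubterm {N M : Lam} (h : TransGen ReductOrSubterm N M)
    (hM : M.Pure) : N.Pure := by
  have below : ∀ {a b}, ReductOrSubterm a b → b.Pure → a.Pure := by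
    rintro a b (hs | h) hb
    · exact hb.of_stepB hs
    · cases h
      exacts [hb.1, hb.2, hb]
  induction h with
  | single h => exact below h hM
  | tail _ h ih => exact ih (below h hM)

/-- The arguments are listed innermost last: `apps X [B₂, B₁] = X B₁ B₂`. -/
def apps : Lam → List Lam → Lam
| X, [] => X
| X, B :: Bs => .app (apps X Bs) B

theorem StepB.apps {X Y : Lam} (h : StepB X Y) : ∀ Bs, StepB (X.apps Bs) (Y.apps Bs)
  | [] => h
  | _ :: Bs => .appL (h.apps Bs)

theorem reflTransGen_immSubterm_apps (X : Lam) :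
    ∀ Bs, ReflTransGen ImmSubterm X (X.apps Bs)
  | [] => .refl
  | _ :: Bs => .tail (reflTransGen_immSubterm_apps X Bs) .appL

theorem transGen_reductOrSubterm_apps_beta (P Q : Lam) (Bs : List Lam) :
    TransGen ReductOrSubterm Q ((Lam.app (.lam P) Q).apps Bs) :=
  TransGen.mono (fun _ _ => Or.inr) _ _
    (TransGen.head' ImmSubterm.appR (reflTransGen_immSubterm_apps _ Bs))

def Neutral : Lam → Prop
| .var _ => True
| .app A _ => Neutral A
| _ => False

theorem exists_app_eq_apps_redex : ∀ {A : Lam}, A.Pure → ¬ A.Neutral → ∀ B,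
    ∃ P Q Bs, Lam.app A B = (Lam.app (.lam P) Q).apps Bs
  | .var _, _, hN, _ => absurd trivial hN
  | .lam P, _, _, B => ⟨P, B, [], rfl⟩
  | .app _ A₂, hA, hN, B => by
    obtain ⟨P, Q, Bs, hA₁⟩ := exists_app_eq_apps_redex hA.1 hN A₂
    exact ⟨P, Q, B :: Bs, by rw [apps, ← hA₁]⟩

def looseBVarRange : Lam → ℕ
| .var n => n + 1
| .app M N => max M.looseBVarRange N.looseBVarRange
| .lam M => M.looseBVarRange - 1
| _ => 0

end Lam

inductive BTy.Proj : BTy → BTy → Prop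
| refl {σ : BTy} : Proj σ σ
| left {σ τ ρ : BTy} : Proj σ ρ → Proj (.inter σ τ) ρ
| right {σ τ ρ : BTy} : Proj τ ρ → Proj (.inter σ τ) ρ

theorem BTy.Proj.trans {σ τ ρ : BTy} (h₁ : Proj σ τ) (h₂ : Proj τ ρ) : Proj σ ρ := by
  induction h₁ with
  | refl => exact h₂
  | left _ ih => exact .left (ih h₂)
  | right _ ih => exact .right (ih h₂)

abbrev TyEnv := ℕ → BTy

namespace TyEnv

def cons (σ : BTy) (g : TyEnv) : TyEnv
| 0 => σ
| n + 1 => g n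

def drop (k : ℕ) (g : TyEnv) : TyEnv := fun n => g (n + k)

/-- The environment of `Q` when `g` is that of `Lam.lift c Q`. -/
def erase (c : ℕ) (g : TyEnv) : TyEnv := fun n => if n < c then g n else g (n + 1)

/-- The environment of `P` when `g` is that of `Lam.subst k Q P` and `σ` is the type of `Q`. -/
def insert (k : ℕ) (σ : BTy) (g : TyEnv) : TyEnv :=
  fun n => if n < k then g n else if n = k then σ else g (n - 1)

def inter (g g' : TyEnv) : TyEnv := fun n => .inter (g n) (g' n)

theorem cons_zero_drop_one (g : TyEnv) : cons (g 0) (drop 1 g) = g := by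
  funext n
  cases n <;> rfl

theorem cons_erase (σ : BTy) (c : ℕ) (g : TyEnv) :
    erase (c + 1) (cons σ g) = cons σ (erase c g) := by
  funext n
  cases n <;> simp [erase, cons]

theorem erase_zero_drop (k : ℕ) (g : TyEnv) : erase 0 (drop k g) = drop (k + 1) g := by
  funext n
  simp only [erase, drop, Nat.not_lt_zero, if_false]
  congr 1
  omega

theorem cons_insert (σ ρ : BTy) (k : ℕ) (g : TyEnv) :
    insert (k + 1) ρ (cons σ g) = cons σ (insert k ρ g) := by
  funext n
  rcases n with _ | _ | n
  · simp [insert, cons]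
  · cases k <;> simp [insert, cons]
  · simp only [insert, cons, Nat.add_lt_add_iff_right, Nat.add_right_cancel_iff]
    split_ifs <;> rfl

theorem insert_zero (σ : BTy) (g : TyEnv) : insert 0 σ g = cons σ g := by
  funext n
  cases n <;> simp [insert, cons]

theorem proj_insert_inter_left (k : ℕ) (σ τ : BTy) (g : TyEnv) (n : ℕ) :
    (insert k (.inter σ τ) g n).Proj (insert k σ g n) := by
  unfold insert
  split_ifs
  exacts [.refl, .left .refl, .refl]

theorem proj_insert_inter_right (k : ℕ) (σ τ : BTy) (g : TyEnv) (n : ℕ) :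
    (insert k (.inter σ τ) g n).Proj (insert k τ g n) := by
  unfold insert
  split_ifs
  exacts [.refl, .right .refl, .refl]

end TyEnv

/-- The fragment of system B without `ω` and unions, in which subtyping is only the projection
of intersections in variable types. -/
inductive IHasType : TyEnv → Lam → BTy → Prop
| var {g : TyEnv} {n : ℕ} {σ : BTy} : (g n).Proj σ → IHasType g (.var n) σ
| app {g : TyEnv} {M N : Lam} {σ τ : BTy} :
    IHasType g M (.arr σ τ) → IHasType g N σ → IHasType g (.app M N) τ
| lam {g : TyEnv} {M : Lam} {σ τ : BTy} :
    IHasType (TyEnv.cons σ g) M τ → IHasType g (.lam M) (.arr σ τ)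
| inter {g : TyEnv} {M : Lam} {σ τ : BTy} :
    IHasType g M σ → IHasType g M τ → IHasType g M (.inter σ τ)

namespace IHasType

open Lam

theorem mono {g g' : TyEnv} {M : Lam} {τ : BTy} (h : IHasType g M τ)
    (hg : ∀ n, (g' n).Proj (g n)) : IHasType g' M τ := by
  induction h generalizing g' with
  | var hσ => exact .var ((hg _).trans hσ)
  | app _ _ ih₁ ih₂ => exact .app (ih₁ hg) (ih₂ hg)
  | lam _ ih => exact .lam (ih fun n => by cases n; exacts [.refl, hg _])
  | inter _ _ ih₁ ih₂ => exact .inter (ih₁ hg) (ih₂ hg)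

theorem inter_left {g g' : TyEnv} {M : Lam} {τ : BTy} (h : IHasType g M τ) :
    IHasType (TyEnv.inter g g') M τ :=
  h.mono fun _ => .left .refl

theorem inter_right {g g' : TyEnv} {M : Lam} {τ : BTy} (h : IHasType g' M τ) :
    IHasType (TyEnv.inter g g') M τ :=
  h.mono fun _ => .right .refl

theorem var_congr {g g' : TyEnv} {m n : ℕ} {τ : BTy} (h : IHasType g (.var m) τ)
    (hg : g' n = g m) : IHasType g' (.var n) τ := by
  generalize hT : Lam.var m = T at h
  induction h with
  | var hσ => cases hT; exact .var (hg ▸ hσ)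
  | inter _ _ ih₁ ih₂ => exact .inter (ih₁ hg hT) (ih₂ hg hT)
  | app => cases hT
  | lam => cases hT

theorem of_lift {g : TyEnv} {c : ℕ} {Q : Lam} {τ : BTy} (h : IHasType g (Q.lift c) τ) :
    IHasType (TyEnv.erase c g) Q τ := by
  generalize hT : Q.lift c = T at h
  induction h generalizing c Q with
  | var hσ =>
    cases Q <;> simp only [Lam.lift, reduceCtorEq] at hT
    split_ifs at hT with hn <;> cases hT <;> exact .var (by simpa [TyEnv.erase, hn] using hσ)
  | app _ _ ih₁ ih₂ =>
    cases Q <;> simp only [Lam.lift, reduceCtorEq, app.injEq] at hT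
    · split_ifs at hT
    · exact .app (ih₁ hT.1) (ih₂ hT.2)
  | lam _ ih =>
    cases Q <;> simp only [Lam.lift, reduceCtorEq, lam.injEq] at hT
    · split_ifs at hT
    · exact .lam (TyEnv.cons_erase .. ▸ ih hT)
  | inter _ _ ih₁ ih₂ => exact .inter (ih₁ hT) (ih₂ hT)

theorem of_iterate_lift {g : TyEnv} {Q : Lam} {τ : BTy} (k : ℕ)
    (h : IHasType g ((Lam.lift 0)^[k] Q) τ) : IHasType (TyEnv.drop k g) Q τ := by
  induction k generalizing Q with
  | zero => exact h
  | succ k ih =>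
    rw [Function.iterate_succ_apply] at h
    exact TyEnv.erase_zero_drop k g ▸ (ih h).of_lift

end IHasType

namespace IHasType

open Lam

theorem expand_subst_var {g : TyEnv} {Q : Lam} {τ ρ : BTy} {n k : ℕ}
    (h : IHasType g (Lam.subst k Q (.var n)) τ) (hQ : IHasType (TyEnv.drop k g) Q ρ) :
    ∃ σ, IHasType (TyEnv.insert k σ g) (.var n) τ ∧ IHasType (TyEnv.drop k g) Q σ := by
  simp only [Lam.subst] at h
  split_ifs at h with hlt heq
  · exact ⟨ρ, h.var_congr (by simp [TyEnv.insert, hlt]), hQ⟩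
  · subst heq
    exact ⟨τ, .var (by simpa [TyEnv.insert] using .refl), h.of_iterate_lift n⟩
  · exact ⟨ρ, h.var_congr (by simp [TyEnv.insert, hlt, heq]), hQ⟩

theorem expand_subst {g : TyEnv} {P Q : Lam} {k : ℕ} {τ ρ : BTy}
    (h : IHasType g (Lam.subst k Q P) τ) (hQ : IHasType (TyEnv.drop k g) Q ρ) :
    ∃ σ, IHasType (TyEnv.insert k σ g) P τ ∧ IHasType (TyEnv.drop k g) Q σ := by
  generalize hT : Lam.subst k Q P = T at h
  induction h generalizing P k with
  | var hσ =>
    rcases P with n | _ | _ | _ | _ | _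
    · exact (hT ▸ IHasType.var hσ).expand_subst_var hQ
    all_goals simp [Lam.subst] at hT
  | @app g _ _ _ _ h₁ h₂ ih₁ ih₂ =>
    rcases P with n | ⟨P₁, P₂⟩ | _ | _ | _ | _
    · exact (hT ▸ IHasType.app h₁ h₂).expand_subst_var hQ
    · simp only [Lam.subst, app.injEq] at hT
      obtain ⟨σ₁, hP₁, hQ₁⟩ := ih₁ hQ hT.1
      obtain ⟨σ₂, hP₂, hQ₂⟩ := ih₂ hQ hT.2
      exact ⟨.inter σ₁ σ₂,
        .app (hP₁.mono (TyEnv.proj_insert_inter_left k σ₁ σ₂ g))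
          (hP₂.mono (TyEnv.proj_insert_inter_right k σ₁ σ₂ g)), .inter hQ₁ hQ₂⟩
    all_goals simp [Lam.subst] at hT
  | lam hb ih =>
    rcases P with n | _ | P | _ | _ | _
    · exact (hT ▸ IHasType.lam hb).expand_subst_var hQ
    · simp [Lam.subst] at hT
    · simp only [Lam.subst, lam.injEq] at hT
      obtain ⟨σ, hP, hQ'⟩ := ih hQ hT
      exact ⟨σ, .lam (TyEnv.cons_insert .. ▸ hP), hQ'⟩
    all_goals simp [Lam.subst] at hT
  | @inter g _ _ _ _ _ ih₁ ih₂ =>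
    obtain ⟨σ₁, hP₁, hQ₁⟩ := ih₁ hQ hT
    obtain ⟨σ₂, hP₂, hQ₂⟩ := ih₂ hQ hT
    exact ⟨.inter σ₁ σ₂,
      .inter (hP₁.mono (TyEnv.proj_insert_inter_left k σ₁ σ₂ g))
        (hP₂.mono (TyEnv.proj_insert_inter_right k σ₁ σ₂ g)), .inter hQ₁ hQ₂⟩

theorem expand_beta {g : TyEnv} {P Q : Lam} {τ ρ : BTy} (h : IHasType g (Lam.subst 0 Q P) τ)
    (hQ : IHasType g Q ρ) : IHasType g (.app (.lam P) Q) τ := by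
  obtain ⟨σ, hP, hQ'⟩ := h.expand_subst hQ
  exact .app (.lam (TyEnv.insert_zero σ g ▸ hP)) hQ'

theorem expand_apps_beta {g : TyEnv} {P Q : Lam} {Bs : List Lam} {τ ρ : BTy}
    (h : IHasType g ((Lam.subst 0 Q P).apps Bs) τ) (hQ : IHasType g Q ρ) :
    IHasType g ((Lam.app (.lam P) Q).apps Bs) τ := by
  generalize hT : (Lam.subst 0 Q P).apps Bs = T at h
  induction h generalizing Bs with
  | inter _ _ ih₁ ih₂ => exact .inter (ih₁ hQ hT) (ih₂ hQ hT)
  | @app g _ _ _ _ h₁ h₂ ih₁ _ =>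
    rcases Bs with _ | ⟨B, Bs⟩
    · exact (hT ▸ IHasType.app h₁ h₂).expand_beta hQ
    · simp only [apps, app.injEq] at hT
      exact .app (ih₁ hQ hT.1) (hT.2 ▸ h₂)
  | var hσ =>
    rcases Bs with _ | _
    exacts [(hT ▸ IHasType.var hσ).expand_beta hQ, by simp [apps] at hT]
  | lam hb =>
    rcases Bs with _ | _
    exacts [(hT ▸ IHasType.lam hb).expand_beta hQ, by simp [apps] at hT]

end IHasType

namespace IHasType

open Lam Relation

theorem exists_app {A B : Lam} {gB : TyEnv} {σ τ : BTy}
    (hA : ∃ g, IHasType g A (.arr σ τ)) (hB : IHasType gB B σ) :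
    ∃ g, IHasType g (.app A B) τ := by
  obtain ⟨gA, hA⟩ := hA
  exact ⟨TyEnv.inter gA gB, .app hA.inter_left hB.inter_right⟩

theorem exists_apps_beta {P Q : Lam} {Bs : List Lam}
    (hred : ∃ g τ, IHasType g ((Lam.subst 0 Q P).apps Bs) τ) (hQ : ∃ g ρ, IHasType g Q ρ) :
    ∃ g τ, IHasType g ((Lam.app (.lam P) Q).apps Bs) τ := by
  obtain ⟨g₁, τ, hred⟩ := hred
  obtain ⟨g₂, ρ, hQ⟩ := hQ
  exact ⟨TyEnv.inter g₁ g₂, τ, hred.inter_left.expand_apps_beta hQ.inter_right⟩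

theorem exists_of_acc {M : Lam} (hM : Acc (TransGen ReductOrSubterm) M) (hP : M.Pure) :
    (∃ g σ, IHasType g M σ) ∧ (M.Neutral → ∀ τ, ∃ g, IHasType g M τ) := by
  induction hM with
  | intro M _ ih =>
  have ih' : ∀ N, TransGen ReductOrSubterm N M →
      (∃ g σ, IHasType g N σ) ∧ (N.Neutral → ∀ τ, ∃ g, IHasType g N τ) :=
    fun N hN => ih N hN (hP.of_transGen_reductOrSubterm hN)
  match M, hP, ih' with
  | .var _, _, _ =>
    exact ⟨⟨fun _ => .atom 0, _, .var .refl⟩, fun _ τ => ⟨fun _ => τ, .var .refl⟩⟩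
  | .lam P, _, ih' =>
    obtain ⟨g, σ, hP⟩ := (ih' P (.single (.inr .lam))).1
    exact
      ⟨⟨TyEnv.drop 1 g, .arr (g 0) σ, .lam (TyEnv.cons_zero_drop_one g ▸ hP)⟩, False.elim⟩
  | .app A B, hPAB, ih' =>
    obtain ⟨gB, σ, hB⟩ := (ih' B (.single (.inr .appR))).1
    by_cases hA : A.Neutral
    · have hAB τ := exists_app ((ih' A (.single (.inr .appL))).2 hA (.arr σ τ)) hB
      obtain ⟨g, hg⟩ := hAB (.atom 0)
      exact ⟨⟨g, _, hg⟩, fun _ => hAB⟩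
    refine ⟨?_, fun h => absurd h hA⟩
    obtain ⟨P, Q, Bs, hM⟩ := exists_app_eq_apps_redex hPAB.1 hA B
    rw [hM] at ih' ⊢
    -- The contraction may discard `Q`, so `Q` is typed on its own: without `ω` this is where
    -- strong, rather than weak, normalization is needed.
    exact exists_apps_beta (ih' _ (.single (.inl (StepB.beta.apps Bs)))).1
      (ih' Q (transGen_reductOrSubterm_apps_beta P Q Bs)).1
  | .const _, hP, _ | .cx, hP, _ | .cty _, hP, _ => exact hP.elim

theorem exists_of_sn {M : Lam} (hP : M.Pure) (hM : M.SNBeta) : ∃ g σ, IHasType g M σ :=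
  (exists_of_acc hM.acc_transGen_reductOrSubterm hP).1

end IHasType

def baseSig : Sig := [.kd 0 .type]

theorem baseSig_ok : SigOk baseSig :=
  .kd .nil (.type (.nil .nil)) (by simp [inDom])

/-- All atoms are collapsed to the single base type `0`, so one kind declaration suffices. -/
def BTy.toBaseFam : BTy → Tm
| .atom _ | .top => .const 0
| .arr σ τ => .pi σ.toBaseFam τ.toBaseFam
| .inter σ τ => .inter σ.toBaseFam τ.toBaseFam
| .union σ τ => .union σ.toBaseFam τ.toBaseFam

@[simp]
theorem BTy.lift_toBaseFam (σ : BTy) (c : ℕ) : Tm.lift c σ.toBaseFam = σ.toBaseFam := by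
  induction σ generalizing c <;> simp [toBaseFam, Tm.lift, *]

@[simp]
theorem BTy.subst_toBaseFam (σ : BTy) (k : ℕ) (N : Tm) :
    Tm.subst k N σ.toBaseFam = σ.toBaseFam := by
  induction σ generalizing k <;> simp [toBaseFam, Tm.subst, *]

theorem BTy.famTy_toBaseFam (σ : BTy) {Γ : Ctx} (hΓ : CtxOk baseSig Γ) :
    FamTy baseSig Γ σ.toBaseFam .type := by
  induction σ generalizing Γ with
  | atom | top => exact .const hΓ (by simp [baseSig])
  | arr σ τ ihσ ihτ => exact .pi (ihσ hΓ) (ihτ (.cons hΓ (ihσ hΓ)))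
  | inter σ τ ihσ ihτ => exact .inter (ihσ hΓ) (ihτ hΓ)
  | union σ τ ihσ ihτ => exact .union (ihσ hΓ) (ihτ hΓ)

def envCtx (g : TyEnv) : ℕ → Ctx
| 0 => []
| L + 1 => (g 0).toBaseFam :: envCtx (TyEnv.drop 1 g) L

theorem ctxOk_envCtx (g : TyEnv) (L : ℕ) : CtxOk baseSig (envCtx g L) := by
  induction L generalizing g with
  | zero => exact .nil baseSig_ok
  | succ L ih => exact .cons (ih _) ((g 0).famTy_toBaseFam (ih _))

theorem varTy_envCtx {g : TyEnv} {n L : ℕ} (h : n < L) :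
    VarTy (envCtx g L) n (g n).toBaseFam := by
  induction n generalizing g L with
  | zero =>
    obtain ⟨L, rfl⟩ := Nat.exists_eq_add_one_of_ne_zero h.ne'
    simpa [envCtx] using VarTy.zero (Γ := envCtx (TyEnv.drop 1 g) L) (σ := (g 0).toBaseFam)
  | succ n ih =>
    obtain ⟨L, rfl⟩ := Nat.exists_eq_add_one_of_ne_zero (Nat.ne_zero_of_lt h)
    simpa [envCtx, TyEnv.drop] using
      (ih (g := TyEnv.drop 1 g) (by omega)).succ (τ := (g 0).toBaseFam)

theorem ObjTy.exists_of_proj {σ ρ : BTy} (hσρ : σ.Proj ρ) {Γ : Ctx} :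
    ∀ {Δ}, ObjTy baseSig Γ Δ σ.toBaseFam →
      ∃ Δ', ObjTy baseSig Γ Δ' ρ.toBaseFam ∧ essence Δ' = essence Δ := by
  induction hσρ with
  | refl => exact fun hΔ => ⟨_, hΔ, rfl⟩
  | left _ ih => exact fun hΔ => (ih (.prl hΔ) :)
  | right _ ih => exact fun hΔ => (ih (.prr hΔ) :)

theorem IHasType.exists_objTy {g : TyEnv} {M : Lam} {σ : BTy} (h : IHasType g M σ) :
    ∀ {L}, M.looseBVarRange ≤ L →
      ∃ Δ, ObjTy baseSig (envCtx g L) Δ σ.toBaseFam ∧ essence Δ = M := by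
  induction h with
  | var hσ =>
    intro L hL
    exact ObjTy.exists_of_proj hσ (.var (ctxOk_envCtx _ L) (varTy_envCtx hL))
  | app _ _ ih₁ ih₂ =>
    intro L hL
    obtain ⟨Δ₁, h₁, e₁⟩ := ih₁ (le_of_max_le_left hL)
    obtain ⟨Δ₂, h₂, e₂⟩ := ih₂ (le_of_max_le_right hL)
    exact ⟨.app Δ₁ Δ₂, by simpa using ObjTy.app h₁ h₂, by simp [essence, e₁, e₂]⟩
  | @lam g _ σ _ _ ih =>
    intro L hL
    obtain ⟨Δ, hΔ, e⟩ := ih (L := L + 1) (by simp only [Lam.looseBVarRange] at hL; omega)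
    exact ⟨.lam σ.toBaseFam Δ, .lam hΔ, by simp [essence, e]⟩
  | inter _ _ ih₁ ih₂ =>
    intro L hL
    obtain ⟨Δ₁, h₁, e₁⟩ := ih₁ hL
    obtain ⟨Δ₂, h₂, e₂⟩ := ih₂ hL
    exact ⟨.pair Δ₁ Δ₂, .pair h₁ h₂ (e₁ ▸ e₂ ▸ .refl _), e₁⟩

/-- Every strongly β-normalizing pure λ-term can be annotated so as to be the
    essence of a well-typed LF_Δ object. -/
theorem sn_term_is_essence_of_typed :
    ∀ M : Lam, M.Pure → M.SNBeta →
      ∃ (S : Sig) (Γ : Ctx) (Δ σ : Tm), ObjTy S Γ Δ σ ∧ essence Δ = M := by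
  intro M hP hSN
  obtain ⟨g, σ, hM⟩ := IHasType.exists_of_sn hP hSN
  obtain ⟨Δ, hΔ, hess⟩ := hM.exists_objTy le_rfl
  exact ⟨baseSig, _, Δ, _, hΔ, hess⟩

end LFDelta
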